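/- Let H and X be continuous linear operators on a finite-dimensional complex inner product space E, let ψ₀ ∈ E be nonzero, Ψ(t) = exp(−itH)ψ₀, Ψ̂(t) = Ψ(t)/‖Ψ(t)‖, and define δ_Ψ̂(X;t) = i(H†X − XH) − i⟨Ψ̂(t), (H† − H)Ψ̂(t)⟩ · X. Then for every t ∈ ℝ, the function t ↦ ⟨Ψ̂(t), X Ψ̂(t)⟩ is differentiable at t with derivative ⟨Ψ̂(t), δ_Ψ̂(X;t) Ψ̂(t)⟩. -/

import Mathlib

/-!
Since `Ψ̂(s)` is a positive real multiple of `Ψ(s)`, the mean value equals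
`⟨Ψ(s), X Ψ(s)⟩ / ⟨Ψ(s), Ψ(s)⟩`, and `Ψ' = -iHΨ`. The quotient rule then gives the derivative,
and moving `H` to the left slot of the inner product via `H†` puts it in the form
`⟨Ψ̂, δ_Ψ̂(X) Ψ̂⟩`.
-/

open ContinuousLinearMap NormedSpace

theorem NormedSpace.exp_apply_ne_zero {𝕜 E : Type*} [RCLike 𝕜] [NormedAddCommGroup E]
    [NormedSpace 𝕜 E] [CompleteSpace E] (A : E →L[𝕜] E) {v : E} (hv : v ≠ 0) : exp A v ≠ 0 := by
  let := NormedAlgebra.restrictScalars ℚ 𝕜 (E →L[𝕜] E)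
  obtain ⟨u, hu⟩ := isUnit_exp A
  intro h
  apply hv
  calc v = (↑u⁻¹ * ↑u : E →L[𝕜] E) v := by rw [u.inv_mul]; rfl
    _ = 0 := by rw [mul_apply_eq_comp, hu, h, map_zero]

theorem hasDerivAt_exp_neg_I_mul_smul_apply {E : Type*} [NormedAddCommGroup E] [NormedSpace ℂ E]
    [CompleteSpace E] (H : E →L[ℂ] E) (ψ₀ : E) (t : ℝ) :
    HasDerivAt (fun s : ℝ => exp (-(Complex.I * s) • H) ψ₀)
      ((-Complex.I) • H (exp (-(Complex.I * t) • H) ψ₀)) t := by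
  have hsmul : ∀ s : ℝ, -(Complex.I * s) • H = s • (-Complex.I) • H := fun s => by
    rw [← Complex.coe_smul, smul_smul, mul_neg, mul_comm]
  simp only [hsmul]
  exact (apply ℂ E ψ₀ |>.restrictScalars ℝ).hasFDerivAt.comp_hasDerivAt t
    (hasDerivAt_exp_smul_const' ((-Complex.I) • H) t)

section Expectation

variable {E : Type*} [NormedAddCommGroup E] [InnerProductSpace ℂ E]

theorem inner_inv_norm_smul_apply (A : E →L[ℂ] E) (v : E) :
    inner ℂ (‖v‖⁻¹ • v) (A (‖v‖⁻¹ • v)) = inner ℂ v (A v) / inner ℂ v v := by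
  rw [← Complex.coe_smul, map_smul, inner_smul_left, inner_smul_right, Complex.conj_ofReal,
    inner_self_eq_norm_sq_to_K, RCLike.ofReal_eq_complex_ofReal]
  push_cast
  ring

theorem hasDerivAt_inner_inv_norm_smul_apply (A : E →L[ℂ] E) {ψ : ℝ → E} {ψ' : E} {t : ℝ}
    (hψ : HasDerivAt ψ ψ' t) (hψt : ψ t ≠ 0) :
    HasDerivAt (fun s => inner ℂ (‖ψ s‖⁻¹ • ψ s) (A (‖ψ s‖⁻¹ • ψ s)))
      ((inner ℂ ψ' (A (ψ t)) + inner ℂ (ψ t) (A ψ')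
        - (inner ℂ ψ' (ψ t) + inner ℂ (ψ t) ψ') * (inner ℂ (ψ t) (A (ψ t)) / inner ℂ (ψ t) (ψ t)))
        / inner ℂ (ψ t) (ψ t)) t := by
  simp only [inner_inv_norm_smul_apply]
  have hAψ : HasDerivAt (fun s => A (ψ s)) (A ψ') t :=
    (A.restrictScalars ℝ).hasFDerivAt.comp_hasDerivAt t hψ
  have hN : inner ℂ (ψ t) (ψ t) ≠ 0 := inner_self_ne_zero.mpr hψt
  refine ((hψ.inner ℂ hAψ).div (hψ.inner ℂ hψ) hN).congr_deriv ?_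
  field_simp
  ring

end Expectation

/-- The mean value `t ↦ ⟨Ψ̂(t), X Ψ̂(t)⟩` is differentiable with derivative
`⟨Ψ̂(t), δ_Ψ̂(X;t) Ψ̂(t)⟩`, where
`δ_Ψ̂(X;t) = i(H†X − XH) − i⟨Ψ̂(t), (H† − H)Ψ̂(t)⟩ • X`. -/
theorem mean_value_hasDerivAt
    {E : Type*} [NormedAddCommGroup E] [InnerProductSpace ℂ E] [FiniteDimensional ℂ E]
    (H X : E →L[ℂ] E) (ψ₀ : E) (hψ₀ : ψ₀ ≠ 0)
    (Ψ Ψhat : ℝ → E)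
    (hΨ : ∀ t : ℝ, Ψ t = exp (-(Complex.I * t) • H) ψ₀)
    (hΨhat : ∀ t : ℝ, Ψhat t = ‖Ψ t‖⁻¹ • Ψ t)
    (δ : (E →L[ℂ] E) → ℝ → (E →L[ℂ] E))
    (hδ : ∀ (A : E →L[ℂ] E) (t : ℝ),
      δ A t = Complex.I • (adjoint H * A - A * H)
        - (Complex.I * (inner ℂ (Ψhat t) ((adjoint H - H) (Ψhat t)) : ℂ)) • A)
    (t : ℝ) :
    HasDerivAt (fun s : ℝ => (inner ℂ (Ψhat s) (X (Ψhat s)) : ℂ))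
      (inner ℂ (Ψhat t) ((δ X t) (Ψhat t))) t := by
  have : CompleteSpace E := FiniteDimensional.complete ℂ E
  obtain rfl : Ψhat = fun s => ‖Ψ s‖⁻¹ • Ψ s := funext hΨhat
  obtain rfl : Ψ = fun s : ℝ => exp (-(Complex.I * s) • H) ψ₀ := funext hΨ
  refine (hasDerivAt_inner_inv_norm_smul_apply X (hasDerivAt_exp_neg_I_mul_smul_apply H ψ₀ t)
    (exp_apply_ne_zero _ hψ₀)).congr_deriv ?_
  rw [hδ, inner_inv_norm_smul_apply, inner_inv_norm_smul_apply]
  simp only [sub_apply, smul_apply, mul_apply_eq_comp, map_smul, inner_sub_right, inner_smul_right,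
    inner_smul_left, adjoint_inner_right, Complex.conj_neg_I]
  ring
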